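/- Let φ(b) = ₁φ₁(a;b;q,z) = ∑_{n≥0} ((a;q)_n/((q;q)_n (b;q)_n)) (−1)^n q^(n(n−1)/2) z^n. Then the three-term contiguous relation (q−b)(az−b) φ(b/q) + [b(q−b) + bz − az(1+q)] φ(b) − (z(b−a)/(1−b)) φ(bq) = 0 holds. -/

import Mathlib

open scoped BigOperators

/-- q-Pochhammer infinite product `(a;q)_∞`. -/
noncomputable def qp (q a : ℂ) : ℂ := ∏' n : ℕ, (1 - a * q ^ n)

/-- q-Pochhammer `(a;q)_k`. -/
noncomputable def qpn (q a : ℂ) (k : ℕ) : ℂ := ∏ j ∈ Finset.range k, (1 - a * q ^ j)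

/-- theta function `θ(x;q) = (x;q)_∞ (q/x;q)_∞`. -/
noncomputable def theta (q x : ℂ) : ℂ := qp q x * qp q (q / x)

/-- the `₁φ₁(a;b;q,z)` series. -/
noncomputable def phi11 (q a b z : ℂ) : ℂ :=
  ∑' n : ℕ, qpn q a n / (qpn q q n * qpn q b n) * (-1) ^ n * q ^ (n * (n - 1) / 2) * z ^ n

/-- the terminating `₂φ₀(q^(-n),B;—;q,z)` series (Gasper–Rahman convention). -/
noncomputable def phi20 (q : ℂ) (n : ℕ) (B z : ℂ) : ℂ :=
  ∑ k ∈ Finset.range (n + 1),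
    qpn q ((q ^ n)⁻¹) k * qpn q B k / qpn q q k * (-1) ^ k * (q ^ (k * (k - 1) / 2))⁻¹ * z ^ k

open Filter Topology

/-!
Write `b = x q`. Since `(x;q)_{n+1} = (1 - x) (xq;q)_n`, the `n`-th terms of `φ(x)`, `φ(xq)`,
`φ(xq²)` and the `(n+1)`-st term of `φ(xq)` are all explicit rational multiples of the `n`-th term
`t_n` of `φ(xq)`, and a rational-function identity shows that the `n`-th term of the contiguous
combination equals `g_{n+1} - g_n` with `g_n = b² t_n (1 - q^n)`. All three series converge by the
ratio test, so the combination telescopes to `lim g - g_0 = 0 - 0`.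
-/

lemma hasSum_sub_succ_of_tendsto {G : Type*} [AddCommGroup G] [TopologicalSpace G]
    [IsTopologicalAddGroup G] [T2Space G] {g : ℕ → G} {l : G} (hg : Tendsto g atTop (𝓝 l))
    (hs : Summable fun n => g (n + 1) - g n) : HasSum (fun n => g (n + 1) - g n) (l - g 0) := by
  rw [hs.hasSum_iff_tendsto_nat]
  simp_rw [Finset.sum_range_sub]
  exact hg.sub_const _

section QPochhammer

variable (q x : ℂ) (n : ℕ)

lemma qpn_succ : qpn q x (n + 1) = qpn q x n * (1 - x * q ^ n) :=
  Finset.prod_range_succ _ _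

lemma qpn_succ' : qpn q x (n + 1) = (1 - x) * qpn q (x * q) n := by
  rw [qpn, Finset.prod_range_succ', pow_zero, mul_one, mul_comm]
  congr 1
  exact Finset.prod_congr rfl fun j _ => by ring

variable {q x n}

lemma qpn_ne_zero_of_succ (h : qpn q x (n + 1) ≠ 0) : qpn q x n ≠ 0 :=
  left_ne_zero_of_mul (qpn_succ q x n ▸ h)

lemma one_sub_mul_pow_ne_zero_of_qpn_succ (h : qpn q x (n + 1) ≠ 0) : 1 - x * q ^ n ≠ 0 :=
  right_ne_zero_of_mul (qpn_succ q x n ▸ h)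

lemma one_sub_ne_zero_of_qpn_succ (h : qpn q x (n + 1) ≠ 0) : 1 - x ≠ 0 :=
  left_ne_zero_of_mul (qpn_succ' q x n ▸ h)

lemma qpn_mul_base_ne_zero (h : qpn q x (n + 1) ≠ 0) : qpn q (x * q) n ≠ 0 :=
  right_ne_zero_of_mul (qpn_succ' q x n ▸ h)

lemma qpn_div_base_succ_ne_zero (hq : q ≠ 0) (hxq : x ≠ q) (h : qpn q x n ≠ 0) :
    qpn q (x / q) (n + 1) ≠ 0 := by
  rw [qpn_succ', div_mul_cancel₀ x hq]
  exact mul_ne_zero (sub_ne_zero.mpr (by rwa [ne_comm, ne_eq, div_eq_one_iff_eq hq])) h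

lemma qpn_self_ne_zero (hq : ‖q‖ < 1) (n : ℕ) : qpn q q n ≠ 0 := by
  refine Finset.prod_ne_zero_iff.mpr fun j _ => sub_ne_zero.mpr fun h => ?_
  have : ‖q ^ (j + 1)‖ < 1 := by
    rw [norm_pow]
    exact pow_lt_one₀ (norm_nonneg q) hq j.succ_ne_zero
  rw [pow_succ', ← h, norm_one] at this
  exact this.false

end QPochhammer

noncomputable def phi11Term (q a b z : ℂ) (n : ℕ) : ℂ :=
  qpn q a n / (qpn q q n * qpn q b n) * (-1) ^ n * q ^ (n * (n - 1) / 2) * z ^ n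

lemma phi11_eq_tsum_phi11Term (q a b z : ℂ) : phi11 q a b z = ∑' n, phi11Term q a b z n := rfl

section Term

variable {q : ℂ} (a x z : ℂ) {n : ℕ}

lemma phi11Term_succ (hG : qpn q q (n + 1) ≠ 0) (hx : qpn q x (n + 1) ≠ 0) :
    phi11Term q a x z (n + 1) = phi11Term q a x z n *
      ((1 - a * q ^ n) * -(q ^ n * z) / ((1 - q * q ^ n) * (1 - x * q ^ n))) := by
  have := one_sub_mul_pow_ne_zero_of_qpn_succ hG
  have := one_sub_mul_pow_ne_zero_of_qpn_succ hx
  simp only [phi11Term, qpn_succ, Nat.triangle_succ, pow_add, pow_succ]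
  field_simp

lemma phi11Term_mul_base (hG : qpn q q n ≠ 0) (hx : qpn q x (n + 1) ≠ 0) :
    phi11Term q a (x * q) z n = phi11Term q a x z n * ((1 - x) / (1 - x * q ^ n)) := by
  have := qpn_ne_zero_of_succ hx
  have := one_sub_mul_pow_ne_zero_of_qpn_succ hx
  have := qpn_mul_base_ne_zero hx
  have h := qpn_succ' q x n
  rw [qpn_succ] at h
  simp only [phi11Term]
  field_simp
  linear_combination qpn q a n * q ^ (n * (n - 1) / 2) * z ^ n * h

lemma summable_phi11Term (hq : ‖q‖ < 1) (hx : ∀ n, qpn q x n ≠ 0) :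
    Summable (phi11Term q a x z) := by
  set ρ : ℂ → ℂ := fun w => (1 - a * w) * -(w * z) / ((1 - q * w) * (1 - x * w))
  have hρ0 : ρ 0 = 0 := by simp [ρ]
  have hcont : ContinuousAt ρ 0 := by fun_prop (disch := norm_num)
  have hρ : Tendsto (fun n => ρ (q ^ n)) atTop (𝓝 0) :=
    hρ0 ▸ hcont.tendsto.comp (tendsto_pow_atTop_nhds_zero_of_norm_lt_one hq)
  refine summable_of_ratio_norm_eventually_le one_half_lt_one ?_
  filter_upwards [hρ.norm.eventually_le_const (show ‖(0 : ℂ)‖ < 1 / 2 by norm_num)] with n hn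
  rw [phi11Term_succ a x z (qpn_self_ne_zero hq _) (hx _), norm_mul, mul_comm]
  exact mul_le_mul_of_nonneg_right hn (norm_nonneg _)

lemma phi11Term_contiguous (hG : qpn q q (n + 1) ≠ 0) (hx : qpn q x (n + 2) ≠ 0) :
    (q - x * q) * (a * z - x * q) * phi11Term q a x z n +
        (x * q * (q - x * q) + x * q * z - a * z * (1 + q)) * phi11Term q a (x * q) z n -
        z * (x * q - a) / (1 - x * q) * phi11Term q a (x * q * q) z n =
      (x * q) ^ 2 * phi11Term q a (x * q) z (n + 1) * (1 - q ^ (n + 1)) -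
        (x * q) ^ 2 * phi11Term q a (x * q) z n * (1 - q ^ n) := by
  have hxq := qpn_mul_base_ne_zero hx
  rw [phi11Term_succ a _ z hG hxq, phi11Term_mul_base a _ z (qpn_ne_zero_of_succ hG) hxq,
    phi11Term_mul_base a _ z (qpn_ne_zero_of_succ hG) (qpn_ne_zero_of_succ hx), pow_succ q n]
  have := one_sub_mul_pow_ne_zero_of_qpn_succ hG
  have := one_sub_mul_pow_ne_zero_of_qpn_succ hxq
  have := one_sub_mul_pow_ne_zero_of_qpn_succ (qpn_ne_zero_of_succ hx)
  have := one_sub_ne_zero_of_qpn_succ hxq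
  generalize q ^ n = w at *
  generalize phi11Term q a x z n = t
  -- `field_simp` normalizes `x * q` to `q * x`, so the side conditions must be in that form
  rw [mul_comm x q] at *
  field_simp
  ring

theorem phi11_contiguous_mul_base (hq : ‖q‖ < 1) (hx : ∀ n, qpn q x n ≠ 0) :
    (q - x * q) * (a * z - x * q) * phi11 q a x z +
        (x * q * (q - x * q) + x * q * z - a * z * (1 + q)) * phi11 q a (x * q) z -
        z * (x * q - a) / (1 - x * q) * phi11 q a (x * q * q) z = 0 := by
  have hxq n : qpn q (x * q) n ≠ 0 := qpn_mul_base_ne_zero (hx (n + 1))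
  have hxqq n : qpn q (x * q * q) n ≠ 0 := qpn_mul_base_ne_zero (hxq (n + 1))
  have hsum := (((summable_phi11Term a x z hq hx).hasSum.mul_left
      ((q - x * q) * (a * z - x * q))).add
    ((summable_phi11Term a _ z hq hxq).hasSum.mul_left
      (x * q * (q - x * q) + x * q * z - a * z * (1 + q)))).sub
    ((summable_phi11Term a _ z hq hxqq).hasSum.mul_left (z * (x * q - a) / (1 - x * q)))
  simp only [phi11Term_contiguous a x z (qpn_self_ne_zero hq _) (hx _)] at hsum
  have hg : Tendsto (fun n : ℕ => (x * q) ^ 2 * phi11Term q a (x * q) z n * (1 - q ^ n))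
      atTop (𝓝 0) := by
    have := ((summable_phi11Term a _ z hq hxq).tendsto_atTop_zero.const_mul ((x * q) ^ 2)).mul
      ((tendsto_const_nhds (x := (1 : ℂ))).sub (tendsto_pow_atTop_nhds_zero_of_norm_lt_one hq))
    rwa [mul_zero, zero_mul] at this
  simp only [phi11_eq_tsum_phi11Term]
  rw [← (hasSum_sub_succ_of_tendsto hg hsum.summable).unique hsum]
  simp

end Term

/-- three-term contiguous relation for `₁φ₁(a;b;q,z)` in the parameter `b`. -/
theorem phi11_contiguous (q : ℝ) (hq0 : 0 < q) (hq1 : q < 1) (a b z : ℂ)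
    (hb : ∀ n : ℕ, b ≠ (((q : ℂ)) ^ n)⁻¹) (hbq : b ≠ (q : ℂ)) :
    ((q : ℂ) - b) * (a * z - b) * phi11 (q : ℂ) a (b / q) z +
        (b * ((q : ℂ) - b) + b * z - a * z * (1 + (q : ℂ))) * phi11 (q : ℂ) a b z -
        z * (b - a) / (1 - b) * phi11 (q : ℂ) a (b * q) z = 0 := by
  have hq : ‖(q : ℂ)‖ < 1 := by rwa [Complex.norm_real, Real.norm_of_nonneg hq0.le]
  have hq0' : (q : ℂ) ≠ 0 := Complex.ofReal_ne_zero.mpr hq0.ne'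
  have hb' n : qpn q b n ≠ 0 := Finset.prod_ne_zero_iff.mpr fun j _ =>
    sub_ne_zero.mpr fun h => hb j (eq_inv_of_mul_eq_one_left h.symm)
  have hbq' : ∀ n, qpn q (b / q) n ≠ 0
    | 0 => by simp [qpn]
    | n + 1 => qpn_div_base_succ_ne_zero hq0' hbq (hb' n)
  have h := phi11_contiguous_mul_base a (b / q) z hq hbq'
  rwa [div_mul_cancel₀ b hq0'] at h
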